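/- Let $(M^n_t)_{0\le t\le T}$ be nonnegative càdlàg supermartingales with $M^n_t \le M^{n+1}_t$ a.s. for all $t,n$, and let $M_t = \lim_n M^n_t$ pointwise a.s. with $E[M_0]<\infty$. Then $(M_t)_{0\le t\le T}$ is a supermartingale and $t \mapsto E[M_t]$ is right-continuous. -/

import Mathlib

open MeasureTheory Filter Set

open Topology

/-!
The supermartingale inequality in the form `∫_A M t ≤ ∫_A M s` (`A ∈ 𝓕 s`, `s ≤ t`) passes to
the limit by Fatou's lemma, because `∫_A Mⁿ t ≤ ∫_A Mⁿ s ≤ ∫_A M s`; with `A = Ω` and `s = 0`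
the same bound gives integrability of every `M t`. Hence `F t = E[M t]` is antitone, and
right-continuity at `t` reduces to: `F ≤ c` on `(t, T]` implies `F t ≤ c`. By right-continuity
of the paths and Fatou's lemma along a sequence `q k ↓ t`, `E[Mⁿ t] ≤ liminf E[Mⁿ (q k)] ≤ c`
for every `n`, and Fatou's lemma in `n` gives `F t ≤ c`. Monotonicity in `n` is only used to
get `Mⁿ ≤ M`; no limit interchange is needed.
-/

variable {Ω : Type*} {m0 : MeasurableSpace Ω}

def SupermartingaleOn (𝓕 : Filtration ℝ m0) (μ : Measure Ω) (f : ℝ → Ω → ℝ) (T : ℝ) : Prop :=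
  (∀ t ∈ Icc (0 : ℝ) T, StronglyMeasurable[𝓕 t] (f t)) ∧
  (∀ t ∈ Icc (0 : ℝ) T, Integrable (f t) μ) ∧
  ∀ s t : ℝ, s ∈ Icc (0 : ℝ) T → t ∈ Icc (0 : ℝ) T → s ≤ t → μ[f t | 𝓕 s] ≤ᵐ[μ] f s

theorem AntitoneOn.continuousWithinAt_Icc_left {α β : Type*} [LinearOrder α] [TopologicalSpace α]
    [OrderTopology α] [LinearOrder β] [TopologicalSpace β] [OrderTopology β] {F : α → β}
    {a b : α} (hF : AntitoneOn F (Icc a b)) (hlub : ∀ c, (∀ s ∈ Ioc a b, F s ≤ c) → F a ≤ c) :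
    ContinuousWithinAt F (Icc a b) a := by
  refine tendsto_order.2 ⟨fun l hl => ?_, fun u hu => ?_⟩
  · obtain ⟨s, hs, hls⟩ : ∃ s ∈ Ioc a b, l < F s := by
      by_contra! h
      exact hl.not_ge (hlub l h)
    filter_upwards [eventually_nhdsWithin_of_eventually_nhds (eventually_lt_nhds hs.1),
      self_mem_nhdsWithin] with v hvs hv
    exact hls.trans_le (hF hv (Ioc_subset_Icc_self hs) hvs.le)
  · filter_upwards [self_mem_nhdsWithin] with v hv
    exact (hF ⟨le_rfl, hv.1.trans hv.2⟩ hv hv.1).trans_lt hu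

theorem ae_le_of_tendsto_of_ae_le_succ {α : Type*} [TopologicalSpace α] [Preorder α]
    [OrderClosedTopology α] {μ : Measure Ω} {f : ℕ → Ω → α} {g : Ω → α}
    (hmono : ∀ n, f n ≤ᵐ[μ] f (n + 1))
    (hfg : ∀ᵐ ω ∂μ, Tendsto (fun n => f n ω) atTop (𝓝 (g ω))) (n : ℕ) : f n ≤ᵐ[μ] g := by
  filter_upwards [ae_all_iff.2 hmono, hfg] with ω hω hlim
  exact (monotone_nat_of_le_succ hω).ge_of_tendsto hlim n

theorem condExp_le_of_forall_setIntegral_le {m : MeasurableSpace Ω} {μ : Measure[m0] Ω}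
    (hm : m ≤ m0) [SigmaFinite (μ.trim hm)] {f g : Ω → ℝ} (hf : Integrable f μ)
    (hg : Integrable g μ) (hgm : StronglyMeasurable[m] g)
    (hfg : ∀ s, MeasurableSet[m] s → ∫ ω in s, f ω ∂μ ≤ ∫ ω in s, g ω ∂μ) :
    μ[f | m] ≤ᵐ[μ] g := by
  refine ae_le_of_ae_le_trim (ae_le_of_forall_setIntegral_le
    (integrable_condExp.trim hm stronglyMeasurable_condExp) (hg.trim hm hgm) fun s hs _ => ?_)
  rw [← setIntegral_trim hm stronglyMeasurable_condExp hs, ← setIntegral_trim hm hgm hs,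
    setIntegral_condExp hm hf hs]
  exact hfg s hs

section Fatou

variable {μ : Measure Ω} {f : ℕ → Ω → ℝ} {g : Ω → ℝ} {C : ℝ}

theorem lintegral_ofReal_le_of_tendsto_of_integral_le (hf : ∀ n, Integrable (f n) μ)
    (hf0 : ∀ n, 0 ≤ᵐ[μ] f n) (hfg : ∀ᵐ ω ∂μ, Tendsto (fun n => f n ω) atTop (𝓝 (g ω)))
    (hC : ∀ n, ∫ ω, f n ω ∂μ ≤ C) :
    ∫⁻ ω, ENNReal.ofReal (g ω) ∂μ ≤ ENNReal.ofReal C :=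
  calc ∫⁻ ω, ENNReal.ofReal (g ω) ∂μ
      = ∫⁻ ω, liminf (fun n => ENNReal.ofReal (f n ω)) atTop ∂μ :=
        lintegral_congr_ae <| hfg.mono fun ω h =>
          ((ENNReal.continuous_ofReal.tendsto _).comp h).liminf_eq.symm
    _ ≤ liminf (fun n => ∫⁻ ω, ENNReal.ofReal (f n ω) ∂μ) atTop :=
        lintegral_liminf_le' fun n => (hf n).aemeasurable.ennreal_ofReal
    _ ≤ ENNReal.ofReal C := liminf_le_of_frequently_le' <| Frequently.of_forall fun n => by
        rw [← ofReal_integral_eq_lintegral_ofReal (hf n) (hf0 n)]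
        exact ENNReal.ofReal_le_ofReal (hC n)

theorem integrable_of_tendsto_of_integral_le (hf : ∀ n, Integrable (f n) μ)
    (hf0 : ∀ n, 0 ≤ᵐ[μ] f n) (hfg : ∀ᵐ ω ∂μ, Tendsto (fun n => f n ω) atTop (𝓝 (g ω)))
    (hC : ∀ n, ∫ ω, f n ω ∂μ ≤ C) : Integrable g μ := by
  have hg0 : 0 ≤ᵐ[μ] g := by
    filter_upwards [hfg, ae_all_iff.2 hf0] with ω hlim h0 using ge_of_tendsto' hlim h0
  exact ⟨aestronglyMeasurable_of_tendsto_ae atTop (fun n => (hf n).1) hfg,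
    (hasFiniteIntegral_iff_ofReal hg0).2 <|
      (lintegral_ofReal_le_of_tendsto_of_integral_le hf hf0 hfg hC).trans_lt ENNReal.ofReal_lt_top⟩

theorem integral_le_of_tendsto_of_integral_le (hf : ∀ n, Integrable (f n) μ)
    (hf0 : ∀ n, 0 ≤ᵐ[μ] f n) (hfg : ∀ᵐ ω ∂μ, Tendsto (fun n => f n ω) atTop (𝓝 (g ω)))
    (hC : ∀ n, ∫ ω, f n ω ∂μ ≤ C) : ∫ ω, g ω ∂μ ≤ C := by
  have hC0 : 0 ≤ C := (integral_nonneg_of_ae (hf0 0)).trans (hC 0)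
  rw [integral_eq_lintegral_pos_part_sub_lintegral_neg_part
    (integrable_of_tendsto_of_integral_le hf hf0 hfg hC)]
  exact (sub_le_self _ ENNReal.toReal_nonneg).trans <| ENNReal.toReal_le_of_le_ofReal hC0 <|
    lintegral_ofReal_le_of_tendsto_of_integral_le hf hf0 hfg hC

theorem integral_le_of_continuousWithinAt_Ici {X : ℝ → Ω → ℝ} {t b : ℝ} (htb : t < b)
    (hX : ∀ s ∈ Ioc t b, Integrable (X s) μ) (hX0 : ∀ s ∈ Ioc t b, 0 ≤ᵐ[μ] X s)
    (hrc : ∀ᵐ ω ∂μ, ContinuousWithinAt (fun s => X s ω) (Ici t) t)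
    (hC : ∀ s ∈ Ioc t b, ∫ ω, X s ω ∂μ ≤ C) : ∫ ω, X t ω ∂μ ≤ C := by
  obtain ⟨q, -, hq, hqt⟩ := exists_seq_strictAnti_tendsto' htb
  have hq' : ∀ n, q n ∈ Ioc t b := fun n => Ioo_subset_Ioc_self (hq n)
  have hqt' : Tendsto q atTop (𝓝[Ici t] t) :=
    tendsto_nhdsWithin_iff.2 ⟨hqt, Eventually.of_forall fun n => (hq n).1.le⟩
  exact integral_le_of_tendsto_of_integral_le (fun n => hX _ (hq' n)) (fun n => hX0 _ (hq' n))
    (hrc.mono fun ω h => h.tendsto.comp hqt') (fun n => hC _ (hq' n))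

end Fatou

namespace SupermartingaleOn

variable {𝓕 : Filtration ℝ m0} {μ : Measure Ω} {f : ℝ → Ω → ℝ} {T : ℝ}

theorem integrable (hf : SupermartingaleOn 𝓕 μ f T) {t : ℝ} (ht : t ∈ Icc 0 T) :
    Integrable (f t) μ :=
  hf.2.1 t ht

theorem setIntegral_le [IsFiniteMeasure μ] (hf : SupermartingaleOn 𝓕 μ f T) {s t : ℝ}
    (hs : s ∈ Icc 0 T) (ht : t ∈ Icc 0 T) (hst : s ≤ t) {A : Set Ω} (hA : MeasurableSet[𝓕 s] A) :
    ∫ ω in A, f t ω ∂μ ≤ ∫ ω in A, f s ω ∂μ := by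
  rw [← setIntegral_condExp (𝓕.le s) (hf.integrable ht) hA]
  exact setIntegral_mono_ae integrable_condExp.integrableOn (hf.integrable hs).integrableOn
    (hf.2.2 s t hs ht hst)

theorem antitoneOn_integral [IsFiniteMeasure μ] (hf : SupermartingaleOn 𝓕 μ f T) :
    AntitoneOn (fun t => ∫ ω, f t ω ∂μ) (Icc 0 T) := fun s hs t ht hst => by
  simpa using hf.setIntegral_le hs ht hst MeasurableSet.univ

theorem of_setIntegral_le [IsFiniteMeasure μ]
    (hadp : ∀ t ∈ Icc (0 : ℝ) T, StronglyMeasurable[𝓕 t] (f t))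
    (hint : ∀ t ∈ Icc (0 : ℝ) T, Integrable (f t) μ)
    (h : ∀ s t : ℝ, s ∈ Icc (0 : ℝ) T → t ∈ Icc (0 : ℝ) T → s ≤ t →
      ∀ A, MeasurableSet[𝓕 s] A → ∫ ω in A, f t ω ∂μ ≤ ∫ ω in A, f s ω ∂μ) :
    SupermartingaleOn 𝓕 μ f T :=
  ⟨hadp, hint, fun s t hs ht hst => condExp_le_of_forall_setIntegral_le (𝓕.le s) (hint t ht)
    (hint s hs) (hadp s hs) (h s t hs ht hst)⟩

end SupermartingaleOn

/-- A monotone a.s. limit `M` of nonnegative càdlàg supermartingales `M^n`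
with `E[M 0] < ∞` is a supermartingale, and `t ↦ E[M t]` is right-continuous on `[0, T]`. -/
theorem monotone_limit_supermartingale_and_right_continuity
    (𝓕 : Filtration ℝ m0) (μ : Measure Ω) [IsProbabilityMeasure μ]
    (T : ℝ) (hT : 0 ≤ T) (M : ℕ → ℝ → Ω → ℝ) (Mlim : ℝ → Ω → ℝ)
    (hMrc : ∀ n, ∀ᵐ ω ∂μ, ∀ t ∈ Icc (0 : ℝ) T, ContinuousWithinAt (fun s => M n s ω) (Ici t) t)
    (hsup : ∀ n, SupermartingaleOn 𝓕 μ (M n) T)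
    (hnonneg : ∀ n, ∀ t ∈ Icc (0 : ℝ) T, ∀ᵐ ω ∂μ, 0 ≤ M n t ω)
    (hmono : ∀ n, ∀ t ∈ Icc (0 : ℝ) T, ∀ᵐ ω ∂μ, M n t ω ≤ M (n + 1) t ω)
    (hconv : ∀ t ∈ Icc (0 : ℝ) T, ∀ᵐ ω ∂μ,
      Tendsto (fun n => M n t ω) atTop (nhds (Mlim t ω)))
    (hmeas : ∀ t ∈ Icc (0 : ℝ) T, StronglyMeasurable[𝓕 t] (Mlim t))
    (hint : Integrable (Mlim 0) μ) :
    SupermartingaleOn 𝓕 μ Mlim T ∧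
      ∀ t ∈ Icc (0 : ℝ) T,
        ContinuousWithinAt (fun s => ∫ ω, Mlim s ω ∂μ) (Icc t T) t := by
  have h0 : (0 : ℝ) ∈ Icc 0 T := ⟨le_rfl, hT⟩
  have hle : ∀ n, ∀ t ∈ Icc 0 T, M n t ≤ᵐ[μ] Mlim t := fun n t ht =>
    ae_le_of_tendsto_of_ae_le_succ (fun k => hmono k t ht) (hconv t ht) n
  have hintlim : ∀ t ∈ Icc 0 T, Integrable (Mlim t) μ := fun t ht =>
    integrable_of_tendsto_of_integral_le (fun n => (hsup n).integrable ht)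
      (fun n => hnonneg n t ht) (hconv t ht) fun n =>
        ((hsup n).antitoneOn_integral h0 ht ht.1).trans
          (integral_mono_ae ((hsup n).integrable h0) hint (hle n 0 h0))
  have hlim : SupermartingaleOn 𝓕 μ Mlim T :=
    .of_setIntegral_le hmeas hintlim fun s t hs ht hst A hA =>
      integral_le_of_tendsto_of_integral_le (fun n => ((hsup n).integrable ht).restrict)
        (fun n => ae_restrict_of_ae (hnonneg n t ht)) (ae_restrict_of_ae (hconv t ht)) fun n =>
          ((hsup n).setIntegral_le hs ht hst hA).trans <| setIntegral_mono_ae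
            ((hsup n).integrable hs).integrableOn (hintlim s hs).integrableOn (hle n s hs)
  refine ⟨hlim, fun t ht => ?_⟩
  rcases ht.2.eq_or_lt with rfl | htT
  · rw [Icc_self]
    exact continuousWithinAt_singleton
  have hsub : Ioc t T ⊆ Icc 0 T := fun s hs => ⟨ht.1.trans hs.1.le, hs.2⟩
  have hF := hlim.antitoneOn_integral.mono (Icc_subset_Icc_left ht.1)
  refine hF.continuousWithinAt_Icc_left fun c hc => ?_
  have hMn : ∀ n, ∫ ω, M n t ω ∂μ ≤ c := fun n =>
    integral_le_of_continuousWithinAt_Ici htT (fun s hs => (hsup n).integrable (hsub hs))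
      (fun s hs => hnonneg n s (hsub hs)) ((hMrc n).mono fun ω h => h t ht) fun s hs =>
        (integral_mono_ae ((hsup n).integrable (hsub hs)) (hintlim s (hsub hs))
          (hle n s (hsub hs))).trans (hc s hs)
  exact integral_le_of_tendsto_of_integral_le (fun n => (hsup n).integrable ht)
    (fun n => hnonneg n t ht) (hconv t ht) hMn
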